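/- Let w be an n×n real matrix with ⦀w⦀∞ ≤ 1 and |γ| < 1, and set s = (I - γw)^{-1}. Then the maximum column-sum norm of s satisfies ⦀s⦀₁ ≤ 1 + n‖w‖∞/(1-|γ|), where ‖w‖∞ = max_{i,j}|w_ij|. -/

import Mathlib

open Matrix BigOperators

/-!
Since `s (1 - γ w) = 1`, the inverse satisfies the fixed-point identity `s = 1 + γ s w`.
In the row-sum operator norm this gives `⦀s⦀∞ ≤ 1 + |γ| ⦀s⦀∞`, i.e. `⦀s⦀∞ ≤ 1 / (1 - |γ|)`.
Reading the identity column by column, the `j`-th column of `s` is `e_j + γ s wⱼ`, where `wⱼ`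
is the `j`-th column of `w`; its `ℓ¹` norm is at most `1 + |γ| n ‖s wⱼ‖∞` and
`‖s wⱼ‖∞ ≤ ⦀s⦀∞ ‖w‖∞`.
-/

theorem le_ciSup₂_of_finite {α ι κ : Type*} [ConditionallyCompleteLattice α] [Finite ι]
    [Finite κ] (f : ι → κ → α) (i : ι) (j : κ) : f i j ≤ ⨆ i, ⨆ j, f i j :=
  le_ciSup₂ (Set.finite_iUnion fun _ => Set.finite_range _).bddAbove i j

theorem eq_one_add_smul_mul_of_mul_one_sub_smul_eq_one {R A : Type*} [CommSemiring R] [Ring A]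
    [Algebra R A] {s w : A} {γ : R} (hs : s * (1 - γ • w) = 1) : s = 1 + γ • (s * w) := by
  rw [← hs, mul_sub, mul_one, mul_smul_comm, sub_add_cancel]

theorem norm_le_inv_one_sub_of_eq_one_add_smul_mul {A : Type*} [SeminormedRing A]
    [NormedSpace ℝ A] {s w : A} {γ : ℝ} (h1 : ‖(1 : A)‖ ≤ 1) (hw : ‖w‖ ≤ 1) (hγ : |γ| < 1)
    (hs : s = 1 + γ • (s * w)) : ‖s‖ ≤ (1 - |γ|)⁻¹ := by
  have hfix : ‖s‖ ≤ 1 + |γ| * ‖s‖ :=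
    calc ‖s‖ = ‖1 + γ • (s * w)‖ := congrArg _ hs
      _ ≤ ‖(1 : A)‖ + |γ| * (‖s‖ * ‖w‖) := by
        grw [norm_add_le, norm_smul, norm_mul_le, Real.norm_eq_abs]
      _ ≤ 1 + |γ| * ‖s‖ := by
        grw [h1, hw, mul_one]
  rw [← one_div, le_div_iff₀ (by linarith)]
  linarith

section LinftyOperatorNorm

open scoped Matrix.Norms.Operator

variable {ι : Type*} [Fintype ι]

theorem Matrix.linfty_opNorm_le_of_sum_abs_le {m : Type*} [Fintype m] (A : Matrix m ι ℝ)
    {c : ℝ} (hc : 0 ≤ c) (h : ∀ i, ∑ j, |A i j| ≤ c) : ‖A‖ ≤ c := by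
  rw [linfty_opNorm_def, ← NNReal.coe_mk c hc, NNReal.coe_le_coe, Finset.sup_le_iff]
  intro i _
  rw [← NNReal.coe_le_coe, NNReal.coe_sum]
  simpa using h i

theorem Matrix.linfty_opNorm_one_le [DecidableEq ι] : ‖(1 : Matrix ι ι ℝ)‖ ≤ 1 := by
  rw [← diagonal_one, linfty_opNorm_diagonal]
  exact (pi_norm_le_iff_of_nonneg zero_le_one).2 fun _ => norm_one.le

theorem Matrix.sum_abs_col_le_of_eq_one_add_smul_mul [DecidableEq ι] {s w : Matrix ι ι ℝ}
    {γ : ℝ} (hs : s = 1 + γ • (s * w)) (j : ι) :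
    ∑ i, |s i j| ≤ 1 + |γ| * (Fintype.card ι * (‖s‖ * ‖wᵀ j‖)) :=
  calc ∑ i, |s i j| = ∑ i, |(1 : Matrix ι ι ℝ) i j + γ * (s *ᵥ wᵀ j) i| := by
        conv_lhs => rw [hs]
        rfl
    _ ≤ ∑ i, (|(1 : Matrix ι ι ℝ) i j| + |γ| * ‖(s *ᵥ wᵀ j) i‖) := by
        gcongr with i
        grw [abs_add_le, abs_mul, Real.norm_eq_abs]
    _ = 1 + |γ| * ∑ i, ‖(s *ᵥ wᵀ j) i‖ := by
        simp [Finset.sum_add_distrib, Finset.mul_sum, one_apply, apply_ite abs]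
    _ ≤ 1 + |γ| * (Fintype.card ι * (‖s‖ * ‖wᵀ j‖)) := by
        grw [Pi.sum_norm_apply_le_norm, nsmul_eq_mul, linfty_opNorm_mulVec]

end LinftyOperatorNorm

/-- Column-sum norm bound for `s = (I - γ w)⁻¹` when `w` has row sums at most 1 and
`|γ| < 1`: `⦀s⦀₁ ≤ 1 + n ‖w‖∞ / (1 - |γ|)`, where `‖w‖∞` is the max-entry norm. -/
theorem inverse_col_sum_bound
    (n : ℕ) (w : Matrix (Fin n) (Fin n) ℝ)
    (hw : ∀ i, ∑ j, |w i j| ≤ 1)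
    (γ : ℝ) (hγ : |γ| < 1)
    (s : Matrix (Fin n) (Fin n) ℝ) (hs : s = (1 - γ • w)⁻¹) :
    ∀ j, ∑ i, |s i j| ≤ 1 + n * (⨆ i, ⨆ j', |w i j'|) / (1 - |γ|) := by
  intro j
  set M := ⨆ i, ⨆ j', |w i j'|
  have hM : ∀ k l, |w k l| ≤ M := le_ciSup₂_of_finite _
  have hM0 : 0 ≤ M := (abs_nonneg _).trans (hM j j)
  have hγ_pos : 0 < 1 - |γ| := by linarith
  by_cases hdet : IsUnit (1 - γ • w).det
  · have hfix := eq_one_add_smul_mul_of_mul_one_sub_smul_eq_one (hs ▸ nonsing_inv_mul _ hdet)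
    open scoped Matrix.Norms.Operator in
    have hs_norm : ‖s‖ ≤ (1 - |γ|)⁻¹ := norm_le_inv_one_sub_of_eq_one_add_smul_mul
      linfty_opNorm_one_le (linfty_opNorm_le_of_sum_abs_le w zero_le_one hw) hγ hfix
    have hw_col : ‖wᵀ j‖ ≤ M := (pi_norm_le_iff_of_nonneg hM0).2 fun k => hM k j
    calc ∑ i, |s i j| ≤ 1 + |γ| * (n * (‖s‖ * ‖wᵀ j‖)) := by
          simpa using sum_abs_col_le_of_eq_one_add_smul_mul hfix j
      _ ≤ 1 + 1 * (n * ((1 - |γ|)⁻¹ * M)) := by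
          grw [hs_norm, hw_col]
          gcongr
      _ = 1 + n * M / (1 - |γ|) := by ring
  · rw [hs, nonsing_inv_apply_not_isUnit _ hdet]
    simp only [Matrix.zero_apply, abs_zero, Finset.sum_const_zero]
    positivity
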